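/- arXiv:2006.16447 — 4 statements merged into one kernel-verified Lean document; each statement's English description precedes it below -/
import Mathlib

section
/- Let 0 → M → N → P → 0 be a short exact sequence of finitely generated Z_p-modules, and suppose p^j annihilates P[p^∞]. Then there is an exact sequence of abelian groups 0 → M[p^∞] → N[p^∞] → P[p^∞] → M_f/p^j M_f, where M_f = M/M[p^∞]. -/
open Pointwise

section Aux

variable {p : ℕ} [Fact p.Prime]
variable {M N P : Type} [AddCommGroup M] [Module ℤ_[p] M]
  [AddCommGroup N] [Module ℤ_[p] N] [AddCommGroup P] [Module ℤ_[p] P]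
variable (f : M →ₗ[ℤ_[p]] N) (g : N →ₗ[ℤ_[p]] P) (j : ℕ)

/-- projection M → (M/torsion)/(p^j • ⊤) -/
noncomputable def auxPi :
    M →ₗ[ℤ_[p]] ((M ⧸ Submodule.torsion ℤ_[p] M) ⧸
      (((p : ℤ_[p]) ^ j) • (⊤ : Submodule ℤ_[p] (M ⧸ Submodule.torsion ℤ_[p] M)))) :=
  (Submodule.mkQ _).comp (Submodule.mkQ (Submodule.torsion ℤ_[p] M))

lemma auxPi_smul_zero (m : M) : auxPi (p := p) (M := M) j ((p : ℤ_[p]) ^ j • m) = 0 := by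
  show Submodule.Quotient.mk (Submodule.Quotient.mk ((p : ℤ_[p]) ^ j • m)) = 0
  rw [Submodule.Quotient.mk_eq_zero, Submodule.Quotient.mk_smul]
  exact Submodule.smul_mem_pointwise_smul (Submodule.Quotient.mk m) ((p : ℤ_[p]) ^ j)
    (⊤ : Submodule ℤ_[p] (M ⧸ Submodule.torsion ℤ_[p] M)) Submodule.mem_top

lemma auxPi_eq_zero_iff (m : M) :
    auxPi (p := p) (M := M) j m = 0 ↔
      ∃ m' : M, m - ((p : ℤ_[p]) ^ j) • m' ∈ Submodule.torsion ℤ_[p] M := by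
  unfold auxPi
  simp only [LinearMap.comp_apply, Submodule.mkQ_apply, Submodule.Quotient.mk_eq_zero]
  constructor
  · intro h
    -- membership in pointwise smul of ⊤
    have h' : (Submodule.Quotient.mk m : M ⧸ Submodule.torsion ℤ_[p] M) ∈
        ((((p : ℤ_[p]) ^ j) • (⊤ : Submodule ℤ_[p] (M ⧸ Submodule.torsion ℤ_[p] M)) :
          Submodule ℤ_[p] _) : Set _) := h
    rw [Submodule.coe_pointwise_smul] at h'
    obtain ⟨y, -, hy⟩ := h'
    obtain ⟨m', rfl⟩ := Submodule.Quotient.mk_surjective _ y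
    refine ⟨m', ?_⟩
    have hy' : ((p : ℤ_[p]) ^ j) • (Submodule.Quotient.mk m' : M ⧸ Submodule.torsion ℤ_[p] M)
        = Submodule.Quotient.mk m := hy
    rw [← Submodule.Quotient.mk_eq_zero, Submodule.Quotient.mk_sub,
      Submodule.Quotient.mk_smul, hy', sub_self]
  · rintro ⟨m', hm'⟩
    have : (Submodule.Quotient.mk m : M ⧸ Submodule.torsion ℤ_[p] M) =
        ((p : ℤ_[p]) ^ j) • Submodule.Quotient.mk m' := by
      rw [← Submodule.Quotient.mk_smul, Submodule.Quotient.eq]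
      exact hm'
    rw [this]
    exact Submodule.smul_mem_pointwise_smul _ _ _ (Submodule.mem_top)

variable {f g} in
lemma delta_indep (hf : Function.Injective f) (hfg : LinearMap.range f = LinearMap.ker g)
    {t : P} {n n' : N} {m m' : M}
    (hn : g n = t) (hn' : g n' = t)
    (hm : f m = ((p : ℤ_[p]) ^ j) • n) (hm' : f m' = ((p : ℤ_[p]) ^ j) • n') :
    auxPi (p := p) (M := M) j m = auxPi (p := p) (M := M) j m' := by
  have h0 : g (n - n') = 0 := by rw [map_sub, hn, hn', sub_self]
  have hmem : n - n' ∈ LinearMap.range f := by rw [hfg]; exact h0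
  obtain ⟨m₀, hm₀⟩ := hmem
  have key : m - m' = ((p : ℤ_[p]) ^ j) • m₀ := by
    apply hf
    rw [map_sub, hm, hm', map_smul, hm₀, smul_sub]
  have : auxPi (p := p) (M := M) j (m - m') = 0 := by rw [key]; exact auxPi_smul_zero j m₀
  rw [map_sub, sub_eq_zero] at this
  exact this

end Aux

/-- Given a short exact sequence `0 → M → N → P → 0` of finitely generated
`ℤ_[p]`-modules with `p^j` annihilating `P[p^∞]`, there is an exact sequence
`0 → M[p^∞] → N[p^∞] → P[p^∞] → M_f/p^j M_f`. -/
theorem stmt1 (p : ℕ) [Fact p.Prime]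
    (M N P : Type) [AddCommGroup M] [Module ℤ_[p] M] [Module.Finite ℤ_[p] M]
    [AddCommGroup N] [Module ℤ_[p] N] [Module.Finite ℤ_[p] N]
    [AddCommGroup P] [Module ℤ_[p] P] [Module.Finite ℤ_[p] P]
    (f : M →ₗ[ℤ_[p]] N) (g : N →ₗ[ℤ_[p]] P)
    (hf : Function.Injective f) (hg : Function.Surjective g)
    (hfg : LinearMap.range f = LinearMap.ker g)
    (j : ℕ) (hj : ∀ x ∈ Submodule.torsion ℤ_[p] P, ((p : ℤ_[p]) ^ j) • x = 0)
    (hfT : ∀ x ∈ Submodule.torsion ℤ_[p] M, f x ∈ Submodule.torsion ℤ_[p] N)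
    (hgT : ∀ x ∈ Submodule.torsion ℤ_[p] N, g x ∈ Submodule.torsion ℤ_[p] P) :
    ∃ δ : (Submodule.torsion ℤ_[p] P) →ₗ[ℤ_[p]]
        ((M ⧸ Submodule.torsion ℤ_[p] M) ⧸
          (((p : ℤ_[p]) ^ j) • (⊤ : Submodule ℤ_[p] (M ⧸ Submodule.torsion ℤ_[p] M)))),
      Function.Injective (f.restrict hfT) ∧
      Function.Exact (f.restrict hfT) (g.restrict hgT) ∧
      Function.Exact (g.restrict hgT) δ := by
  classical
  set π := auxPi (p := p) (M := M) j with hπ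
  have hpne : ((p : ℤ_[p]) ^ j) ≠ 0 := by
    apply pow_ne_zero
    exact_mod_cast (Fact.out : p.Prime).ne_zero
  -- existence of witnesses for each torsion element of P
  have hwit : ∀ t : Submodule.torsion ℤ_[p] P, ∃ n : N, ∃ m : M,
      g n = (t : P) ∧ f m = ((p : ℤ_[p]) ^ j) • n := by
    intro t
    obtain ⟨n, hn⟩ := hg (t : P)
    have h0 : g (((p : ℤ_[p]) ^ j) • n) = 0 := by
      rw [map_smul, hn]; exact hj _ t.2
    have : ((p : ℤ_[p]) ^ j) • n ∈ LinearMap.range f := by rw [hfg]; exact h0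
    obtain ⟨m, hm⟩ := this
    exact ⟨n, m, hn, hm⟩
  choose nn mm hnn hmm using hwit
  have δspec : ∀ (t : Submodule.torsion ℤ_[p] P) (n : N) (m : M),
      g n = (t : P) → f m = ((p : ℤ_[p]) ^ j) • n → π (mm t) = π m := by
    intro t n m hn hm
    exact delta_indep j hf hfg (hnn t) hn (hmm t) hm
  refine ⟨{ toFun := fun t => π (mm t),
            map_add' := ?_, map_smul' := ?_ }, ?_, ?_, ?_⟩
  · intro t₁ t₂
    have h1 : g (nn t₁ + nn t₂) = ((t₁ + t₂ : Submodule.torsion ℤ_[p] P) : P) := by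
      rw [map_add, hnn, hnn]; rfl
    have h2 : f (mm t₁ + mm t₂) = ((p : ℤ_[p]) ^ j) • (nn t₁ + nn t₂) := by
      rw [map_add, hmm, hmm, smul_add]
    show π (mm (t₁ + t₂)) = π (mm t₁) + π (mm t₂)
    rw [δspec (t₁ + t₂) _ _ h1 h2, map_add]
  · intro c t
    have h1 : g (c • nn t) = ((c • t : Submodule.torsion ℤ_[p] P) : P) := by
      rw [map_smul, hnn]; rfl
    have h2 : f (c • mm t) = ((p : ℤ_[p]) ^ j) • (c • nn t) := by
      rw [map_smul, hmm, smul_comm]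
    show π (mm (c • t)) = (RingHom.id ℤ_[p]) c • π (mm t)
    rw [δspec (c • t) _ _ h1 h2, map_smul]; rfl
  · -- injectivity of f.restrict
    intro x y hxy
    apply Subtype.ext
    apply hf
    have := congrArg Subtype.val hxy
    simpa [LinearMap.restrict_apply] using this
  · -- exactness at N_T
    intro y
    constructor
    · intro h
      have hy0 : g (y : N) = 0 := by
        have := congrArg Subtype.val h
        simpa [LinearMap.restrict_apply] using this
      have : (y : N) ∈ LinearMap.range f := by rw [hfg]; exact hy0
      obtain ⟨m, hm⟩ := this
      have hmT : m ∈ Submodule.torsion ℤ_[p] M := by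
        obtain ⟨c, hc⟩ := (Submodule.mem_torsion_iff (R := ℤ_[p]) (y : N)).mp y.2
        rw [Submonoid.smul_def] at hc
        refine (Submodule.mem_torsion_iff (R := ℤ_[p]) m).mpr ⟨c, ?_⟩
        rw [Submonoid.smul_def]
        apply hf
        rw [map_smul, hm, hc, map_zero]
      exact ⟨⟨m, hmT⟩, Subtype.ext (by simpa [LinearMap.restrict_apply] using hm)⟩
    · rintro ⟨x, rfl⟩
      apply Subtype.ext
      have hx : g (f (x : M)) = 0 := by
        have : f (x : M) ∈ LinearMap.ker g := by rw [← hfg]; exact ⟨x, rfl⟩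
        exact this
      simpa [LinearMap.restrict_apply] using hx
  · -- exactness at P_T
    intro t
    constructor
    · intro h
      -- δ t = 0 : π (mm t) = 0
      simp only [LinearMap.coe_mk, AddHom.coe_mk] at h
      rw [hπ, auxPi_eq_zero_iff] at h
      obtain ⟨m', hm'⟩ := h
      obtain ⟨c, hc⟩ := (Submodule.mem_torsion_iff (R := ℤ_[p]) _).mp hm'
      rw [Submonoid.smul_def] at hc
      -- candidate preimage: nn t - f m'
      have hgcand : g (nn t - f m') = (t : P) := by
        rw [map_sub, hnn]
        have : g (f m') = 0 := by
          have : f m' ∈ LinearMap.ker g := by rw [← hfg]; exact ⟨m', rfl⟩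
          exact this
        rw [this, sub_zero]
      have hcandT : nn t - f m' ∈ Submodule.torsion ℤ_[p] N := by
        set q : nonZeroDivisors ℤ_[p] := ⟨((p : ℤ_[p]) ^ j), mem_nonZeroDivisors_of_ne_zero hpne⟩
        have hq : (q : ℤ_[p]) = (p : ℤ_[p]) ^ j := rfl
        refine (Submodule.mem_torsion_iff (R := ℤ_[p]) _).mpr ⟨c * q, ?_⟩
        have hkey : ((p : ℤ_[p]) ^ j) • (nn t - f m')
            = f (mm t - ((p : ℤ_[p]) ^ j) • m') := by
          rw [map_sub, hmm, map_smul, smul_sub]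
        calc (c * q) • (nn t - f m')
            = (c : ℤ_[p]) • (((p : ℤ_[p]) ^ j) • (nn t - f m')) := by
              rw [Submonoid.smul_def, Submonoid.coe_mul, mul_smul, hq]
          _ = (c : ℤ_[p]) • f (mm t - ((p : ℤ_[p]) ^ j) • m') := by rw [hkey]
          _ = f ((c : ℤ_[p]) • (mm t - ((p : ℤ_[p]) ^ j) • m')) := by rw [map_smul]
          _ = 0 := by rw [hc, map_zero]
      refine ⟨⟨nn t - f m', hcandT⟩, Subtype.ext ?_⟩
      simpa [LinearMap.restrict_apply] using hgcand
    · rintro ⟨y, rfl⟩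
      -- t = g y with y torsion; show δ t = 0
      simp only [LinearMap.coe_mk, AddHom.coe_mk]
      set t : Submodule.torsion ℤ_[p] P := ⟨g (y : N), hgT _ y.2⟩ with ht
      have hgy : g (y : N) = (t : P) := rfl
      -- witness: n = y, m with f m = p^j • y
      have hy0 : g (((p : ℤ_[p]) ^ j) • (y : N)) = 0 := by
        rw [map_smul, hgy]; exact hj _ t.2
      have : ((p : ℤ_[p]) ^ j) • (y : N) ∈ LinearMap.range f := by rw [hfg]; exact hy0
      obtain ⟨m, hm⟩ := this
      have heq : (g.restrict hgT) y = t := Subtype.ext rfl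
      rw [heq, δspec t (y : N) m hgy hm]
      -- m is torsion since f m is torsion (p^j • y with y torsion)
      have hmT : m ∈ Submodule.torsion ℤ_[p] M := by
        obtain ⟨c, hc⟩ := (Submodule.mem_torsion_iff (R := ℤ_[p]) (y : N)).mp y.2
        rw [Submonoid.smul_def] at hc
        refine (Submodule.mem_torsion_iff (R := ℤ_[p]) m).mpr ⟨c, ?_⟩
        rw [Submonoid.smul_def]
        apply hf
        rw [map_smul, hm, map_zero, smul_comm, hc, smul_zero]
      -- hence π m = 0
      rw [hπ, auxPi_eq_zero_iff]
      exact ⟨0, by simpa using hmT⟩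
end

section
/- Let 0 → M → N → P → Q be an exact sequence of finitely generated Z_p-modules with M finite. Then e(P) ≤ e(N) + e(Q) and |e(N) − e(P)| ≤ e(M) + e(Q), where p^{e(X)} is the order of the finite group X[p^∞]. -/
open Submodule

lemma aux_card_eq_ker_mul_range {A B : Type*} [AddCommGroup A] [AddCommGroup B] (φ : A →+ B) :
    Nat.card A = Nat.card φ.range * Nat.card φ.ker := by
  rw [AddSubgroup.card_eq_card_quotient_mul_card_addSubgroup φ.ker]
  congr 1
  exact Nat.card_congr (QuotientAddGroup.quotientKerEquivRange φ).toEquiv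

lemma aux_finite_torsion {R : Type*} [CommRing R] [IsDomain R] [CharZero R] {A : Type*}
    [AddCommGroup A] [Module R A] [Finite A] (x : A) : x ∈ Submodule.torsion R A := by
  have hc : (Nat.card A : R) ≠ 0 := by
    exact_mod_cast Nat.card_pos.ne'
  refine ⟨⟨(Nat.card A : R), mem_nonZeroDivisors_of_ne_zero hc⟩, ?_⟩
  show (Nat.card A : R) • x = 0
  rw [Nat.cast_smul_eq_nsmul]
  exact card_nsmul_eq_zero'

lemma aux_map_torsion {R A B : Type*} [CommRing R] [AddCommGroup A] [Module R A]
    [AddCommGroup B] [Module R B] (g : A →ₗ[R] B) {x : A}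
    (hx : x ∈ Submodule.torsion R A) : g x ∈ Submodule.torsion R B := by
  obtain ⟨a, ha⟩ := (Submodule.mem_torsion_iff x).mp hx
  refine (Submodule.mem_torsion_iff _).mpr ⟨a, ?_⟩
  rw [Submonoid.smul_def] at ha ⊢
  rw [← map_smul, ha, map_zero]

/-- For an exact sequence `0 → M → N → P → Q` of finitely generated
`ℤ_[p]`-modules with `M` finite, writing `p^{e(X)} = |X[p^∞]|`, one has
`e(P) ≤ e(N) + e(Q)` and `|e(N) − e(P)| ≤ e(M) + e(Q)`. -/
theorem stmt4 (p : ℕ) [Fact p.Prime]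
    (M N P Q : Type) [AddCommGroup M] [Module ℤ_[p] M] [Module.Finite ℤ_[p] M] [Finite M]
    [AddCommGroup N] [Module ℤ_[p] N] [Module.Finite ℤ_[p] N]
    [AddCommGroup P] [Module ℤ_[p] P] [Module.Finite ℤ_[p] P]
    [AddCommGroup Q] [Module ℤ_[p] Q] [Module.Finite ℤ_[p] Q]
    (f : M →ₗ[ℤ_[p]] N) (g : N →ₗ[ℤ_[p]] P) (h : P →ₗ[ℤ_[p]] Q)
    (hf : Function.Injective f)
    (hfg : LinearMap.range f = LinearMap.ker g)
    (hgh : LinearMap.range g = LinearMap.ker h)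
    (eM eN eP eQ : ℕ)
    (heM : Nat.card (Submodule.torsion ℤ_[p] M) = p ^ eM)
    (heN : Nat.card (Submodule.torsion ℤ_[p] N) = p ^ eN)
    (heP : Nat.card (Submodule.torsion ℤ_[p] P) = p ^ eP)
    (heQ : Nat.card (Submodule.torsion ℤ_[p] Q) = p ^ eQ) :
    eP ≤ eN + eQ ∧ |(eN : ℤ) - (eP : ℤ)| ≤ (eM : ℤ) + (eQ : ℤ) := by
  have hp1 : 1 < p := (Fact.out : p.Prime).one_lt
  have hppos : 0 < p := lt_trans one_pos hp1
  have fTN : Finite (torsion ℤ_[p] N) :=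
    Nat.finite_of_card_ne_zero (by rw [heN]; positivity)
  have fTP : Finite (torsion ℤ_[p] P) :=
    Nat.finite_of_card_ne_zero (by rw [heP]; positivity)
  have fTQ : Finite (torsion ℤ_[p] Q) :=
    Nat.finite_of_card_ne_zero (by rw [heQ]; positivity)
  have hMcard : Nat.card M = p ^ eM := by
    rw [← heM]
    exact (Nat.card_congr (Equiv.subtypeUnivEquiv fun x => aux_finite_torsion x)).symm
  -- the map  torsion N → P  induced by g
  set φ : ↥(torsion ℤ_[p] N) →+ P :=
    g.toAddMonoidHom.comp ((torsion ℤ_[p] N).subtype.toAddMonoidHom) with hφ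
  have h1 : Nat.card ↥(torsion ℤ_[p] N) = Nat.card φ.range * Nat.card φ.ker :=
    aux_card_eq_ker_mul_range φ
  have hmapφ : ∀ y : φ.range, (y : P) ∈ torsion ℤ_[p] P := by
    rintro ⟨y, hy⟩
    obtain ⟨x, rfl⟩ := AddMonoidHom.mem_range.mp hy
    exact aux_map_torsion g x.2
  have h2 : Nat.card φ.range ≤ Nat.card (torsion ℤ_[p] P) :=
    Nat.card_le_card_of_injective (fun y => (⟨(y : P), hmapφ y⟩ : ↥(torsion ℤ_[p] P)))
      (by
        intro y z hyz
        simp only [Subtype.mk.injEq] at hyz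
        exact Subtype.ext hyz)
  have hkerφ : ∀ x : φ.ker, ∃ m : M, f m = ((x : ↥(torsion ℤ_[p] N)) : N) := by
    intro x
    have hx : ((x : ↥(torsion ℤ_[p] N)) : N) ∈ LinearMap.range f := by
      rw [hfg, LinearMap.mem_ker]
      exact x.2
    exact hx
  choose F hF using hkerφ
  have h3 : Nat.card φ.ker ≤ Nat.card M := by
    refine Nat.card_le_card_of_injective F ?_
    intro x y hxy
    have hv : ((x : ↥(torsion ℤ_[p] N)) : N) = ((y : ↥(torsion ℤ_[p] N)) : N) := by
      rw [← hF x, ← hF y, hxy]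
    exact Subtype.ext (Subtype.ext hv)
  have ineq1 : p ^ eN ≤ p ^ (eP + eM) := by
    rw [pow_add]
    calc p ^ eN = Nat.card φ.range * Nat.card φ.ker := by rw [← heN]; exact h1
      _ ≤ p ^ eP * p ^ eM := Nat.mul_le_mul (heP ▸ h2) (hMcard ▸ h3)
  -- the map torsion P → Q induced by h
  set ψ : ↥(torsion ℤ_[p] P) →+ Q :=
    h.toAddMonoidHom.comp ((torsion ℤ_[p] P).subtype.toAddMonoidHom) with hψ
  have h1' : Nat.card ↥(torsion ℤ_[p] P) = Nat.card ψ.range * Nat.card ψ.ker :=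
    aux_card_eq_ker_mul_range ψ
  have hmapψ : ∀ y : ψ.range, (y : Q) ∈ torsion ℤ_[p] Q := by
    rintro ⟨y, hy⟩
    obtain ⟨x, rfl⟩ := AddMonoidHom.mem_range.mp hy
    exact aux_map_torsion h x.2
  have h2' : Nat.card ψ.range ≤ Nat.card (torsion ℤ_[p] Q) :=
    Nat.card_le_card_of_injective (fun y => (⟨(y : Q), hmapψ y⟩ : ↥(torsion ℤ_[p] Q)))
      (by
        intro y z hyz
        simp only [Subtype.mk.injEq] at hyz
        exact Subtype.ext hyz)
  have hkerψ : ∀ x : ψ.ker, ∃ n : ↥(torsion ℤ_[p] N),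
      g (n : N) = ((x : ↥(torsion ℤ_[p] P)) : P) := by
    intro x
    have hx : ((x : ↥(torsion ℤ_[p] P)) : P) ∈ LinearMap.range g := by
      rw [hgh, LinearMap.mem_ker]
      exact x.2
    obtain ⟨n, hn⟩ := hx
    obtain ⟨a, ha⟩ := (Submodule.mem_torsion_iff _).mp (x : ↥(torsion ℤ_[p] P)).2
    rw [Submonoid.smul_def] at ha
    have hgan : g ((a : ℤ_[p]) • n) = 0 := by rw [map_smul, hn, ha]
    have hran : (a : ℤ_[p]) • n ∈ LinearMap.range f := by
      rw [hfg, LinearMap.mem_ker]; exact hgan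
    obtain ⟨m, hm⟩ := hran
    obtain ⟨b, hb⟩ := (Submodule.mem_torsion_iff m).mp (aux_finite_torsion (R := ℤ_[p]) m)
    rw [Submonoid.smul_def] at hb
    refine ⟨⟨n, (Submodule.mem_torsion_iff n).mpr ⟨b * a, ?_⟩⟩, hn⟩
    rw [Submonoid.smul_def, Submonoid.coe_mul, mul_smul, ← hm, ← map_smul, hb, map_zero]
  choose G hG using hkerψ
  have h3' : Nat.card ψ.ker ≤ Nat.card ↥(torsion ℤ_[p] N) := by
    refine Nat.card_le_card_of_injective G ?_
    intro x y hxy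
    have hv : ((x : ↥(torsion ℤ_[p] P)) : P) = ((y : ↥(torsion ℤ_[p] P)) : P) := by
      rw [← hG x, ← hG y, hxy]
    exact Subtype.ext (Subtype.ext hv)
  have ineq2 : p ^ eP ≤ p ^ (eQ + eN) := by
    rw [pow_add]
    calc p ^ eP = Nat.card ψ.range * Nat.card ψ.ker := by rw [← heP]; exact h1'
      _ ≤ p ^ eQ * p ^ eN := Nat.mul_le_mul (heQ ▸ h2') (heN ▸ h3')
  have E1 : eN ≤ eP + eM := (Nat.pow_le_pow_iff_right hp1).mp ineq1
  have E2 : eP ≤ eQ + eN := (Nat.pow_le_pow_iff_right hp1).mp ineq2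
  refine ⟨by omega, ?_⟩
  rw [abs_le]
  constructor <;> omega
end

section
/- Let Γ be a profinite group isomorphic to Z_p, let Γ_n be its unique open subgroup of index p^n, and let U be a finitely generated Z_p-module with a continuous Γ-action. If the coinvariant module U_{Γ_n} is finite for every n, then the invariant submodule U^{Γ_n} is finite for every n, and moreover U^{Γ_n} is contained in U[p^∞]; in particular the orders |U^{Γ_n}| are bounded independently of n. -/
/-! Over the domain `ℤ_[p]`, rank–nullity for the endomorphism `γ ^ p ^ n - 1` of the finite
module `U` says that its kernel (the invariants) and cokernel (the coinvariants) have the same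
rank. Finite coinvariants thus force torsion invariants. A finitely generated torsion
`ℤ_[p]`-module is a finite module over some `ℤ_[p] ⧸ (a)` with `a ≠ 0`, which is finite, so the
invariants are finite. They increase with `n`, so by noetherianity they stabilise, which bounds
their orders. -/

open Module LinearMap

variable {R M : Type*}

theorem Module.finite_of_isTorsion [CommRing R] [Ring.HasFiniteQuotients R]
    [AddCommGroup M] [Module R M] [Module.Finite R M] (hM : IsTorsion R M) : Finite M := by
  rcases subsingleton_or_nontrivial R with _ | _
  · have := Module.subsingleton R M
    infer_instance
  obtain ⟨a, ha, ha₀⟩ := Submodule.annihilator_top_inter_nonZeroDivisors hM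
  have hMa : IsTorsionBy R M a := fun x => Submodule.mem_annihilator.mp ha x Submodule.mem_top
  let := hMa.module
  have : Finite (R ⧸ Ideal.span {a}) := Ring.HasFiniteQuotients.finiteQuotient
    (by simpa using nonZeroDivisors.ne_zero ha₀)
  have : Module.Finite (R ⧸ Ideal.span {a}) M := Module.Finite.of_restrictScalars_finite R _ _
  exact Module.finite_of_finite (R ⧸ Ideal.span {a})

instance PadicInt.hasFiniteQuotients (p : ℕ) [Fact p.Prime] : Ring.HasFiniteQuotients ℤ_[p] where
  finiteQuotient {I} hI := by
    obtain ⟨n, rfl⟩ := PadicInt.ideal_eq_span_pow_p hI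
    rw [← PadicInt.ker_toZModPow]
    exact Finite.of_equiv _ (RingHom.quotientKerEquivOfSurjective
      (ZMod.ringHom_surjective (PadicInt.toZModPow n))).toEquiv.symm

theorem Module.isTorsion_of_finite [CommRing R] [IsDomain R] [CharZero R]
    [AddCommGroup M] [Module R M] [Finite M] : IsTorsion R M := fun {x} =>
  ⟨⟨Nat.card M, mem_nonZeroDivisors_of_ne_zero (Nat.cast_ne_zero.mpr Nat.card_pos.ne')⟩, by
    simp only [Submonoid.mk_smul, Nat.cast_smul_eq_nsmul, card_nsmul_eq_zero']⟩

theorem LinearMap.finrank_ker_eq_finrank_quotient_range [CommRing R]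
    [IsDomain R] [AddCommGroup M] [Module R M] [Module.Finite R M] (f : M →ₗ[R] M) :
    finrank R (ker f) = finrank R (M ⧸ range f) := by
  have hker := (ker f).finrank_quotient_add_finrank
  have hrange := (range f).finrank_quotient_add_finrank
  rw [f.quotKerEquivRange.finrank_eq] at hker
  omega

theorem LinearMap.isTorsion_ker_of_isTorsion_quotient_range [CommRing R]
    [IsDomain R] [IsNoetherianRing R] [AddCommGroup M] [Module R M] [Module.Finite R M]
    (f : M →ₗ[R] M) (hf : IsTorsion R (M ⧸ range f)) : IsTorsion R (ker f) := by
  rw [← finrank_eq_zero_iff_isTorsion, f.finrank_ker_eq_finrank_quotient_range]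
  exact finrank_eq_zero_iff_isTorsion.mpr hf

theorem Module.End.ker_pow_sub_one_le_ker_pow_mul_sub_one [CommRing R]
    [AddCommGroup M] [Module R M] (f : Module.End R M) (m k : ℕ) :
    ker (f ^ m - 1) ≤ ker (f ^ (m * k) - 1) := by
  rw [pow_mul, ← geom_sum_mul (f ^ m) k]
  exact ker_le_ker_comp (f ^ m - 1) (∑ i ∈ Finset.range k, (f ^ m) ^ i)

theorem Submodule.exists_natCard_le_of_monotone [Semiring R] [AddCommMonoid M]
    [Module R M] [IsNoetherian R M] {N : ℕ → Submodule R M} (hN : Monotone N)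
    (hfin : ∀ n, Finite (N n)) : ∃ B, ∀ n, Nat.card (N n) ≤ B := by
  obtain ⟨k, hk⟩ := monotone_stabilizes_iff_noetherian.mpr ‹_› ⟨N, hN⟩
  refine ⟨Nat.card (N k), fun n => ?_⟩
  have hle : N n ≤ N k := (hN (le_max_left n k)).trans (hk _ (le_max_right n k)).ge
  have := hfin k
  exact Nat.card_le_card_of_injective _ (Submodule.inclusion_injective hle)

theorem Submodule.le_torsion_of_isTorsion [CommRing R] [AddCommGroup M] [Module R M]
    {N : Submodule R M} (hN : IsTorsion R N) : N ≤ torsion R M := fun x hx => by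
  obtain ⟨a, ha⟩ := @hN ⟨x, hx⟩
  exact ⟨a, congrArg Subtype.val ha⟩

theorem stmt9_general (p : ℕ) [Fact p.Prime] (U : Type) [AddCommGroup U] [Module ℤ_[p] U]
    [Module.Finite ℤ_[p] U]
    (γ : Module.End ℤ_[p] U)
    (hcoinv : ∀ n : ℕ, Finite (U ⧸ LinearMap.range (γ ^ (p ^ n) - 1))) :
    (∀ n : ℕ, Finite (LinearMap.ker (γ ^ (p ^ n) - 1))) ∧
    (∀ n : ℕ, LinearMap.ker (γ ^ (p ^ n) - 1) ≤ Submodule.torsion ℤ_[p] U) ∧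
    ∃ B : ℕ, ∀ n : ℕ, Nat.card (LinearMap.ker (γ ^ (p ^ n) - 1)) ≤ B := by
  have htorsion (n : ℕ) : IsTorsion ℤ_[p] (ker (γ ^ (p ^ n) - 1)) :=
    have := hcoinv n
    (γ ^ (p ^ n) - 1).isTorsion_ker_of_isTorsion_quotient_range isTorsion_of_finite
  have hfinite (n : ℕ) : Finite (ker (γ ^ (p ^ n) - 1)) := finite_of_isTorsion (htorsion n)
  have hmono : Monotone fun n => ker (γ ^ (p ^ n) - 1) := monotone_nat_of_le_succ fun n => by
    simpa only [pow_succ] using γ.ker_pow_sub_one_le_ker_pow_mul_sub_one (p ^ n) p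
  exact ⟨hfinite, fun n => Submodule.le_torsion_of_isTorsion (htorsion n),
    Submodule.exists_natCard_le_of_monotone hmono hfinite⟩

/-- Let `Γ ≅ ℤ_p` act continuously on a finitely generated `ℤ_[p]`-module
`U`; the action is determined by a topological generator, i.e. a bijective endomorphism
`γ` of `U`, and `Γ_n`-invariants (resp. coinvariants) are the kernel (resp. cokernel) of
`γ^{p^n} − 1`. If all coinvariant modules `U_{Γ_n}` are finite, then all invariant
modules `U^{Γ_n}` are finite, contained in `U[p^∞]`, and of order bounded
independently of `n`. -/
theorem stmt9 (p : ℕ) [Fact p.Prime] (U : Type) [AddCommGroup U] [Module ℤ_[p] U]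
    [Module.Finite ℤ_[p] U]
    (γ : Module.End ℤ_[p] U) (hγ : Function.Bijective γ)
    (hcoinv : ∀ n : ℕ, Finite (U ⧸ LinearMap.range (γ ^ (p ^ n) - 1))) :
    (∀ n : ℕ, Finite (LinearMap.ker (γ ^ (p ^ n) - 1))) ∧
    (∀ n : ℕ, LinearMap.ker (γ ^ (p ^ n) - 1) ≤ Submodule.torsion ℤ_[p] U) ∧
    ∃ B : ℕ, ∀ n : ℕ, Nat.card (LinearMap.ker (γ ^ (p ^ n) - 1)) ≤ B :=
  stmt9_general p U γ hcoinv
end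

section
/- Let {M_n} be an inverse system of finitely generated Z_p-modules and {N_n} another inverse system, with compatible exact sequences 0 → C_n → M_n → N_n → D_n → 0 where each C_n and each D_n is finite. Suppose moreover that the induced maps on inverse limits satisfy lim C_n = 0 and lim D_n = 0. Then the induced map lim(M_n[p^∞]) → lim(N_n[p^∞]) is an isomorphism. -/
/-- The inverse limit of an inverse system of `ℤ_[p]`-modules indexed by `ℕ`,
realized as the submodule of the product consisting of compatible sequences. -/
def InvLim (p : ℕ) [Fact p.Prime] (M : ℕ → Type)
    [∀ n, AddCommGroup (M n)] [∀ n, Module ℤ_[p] (M n)]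
    (t : ∀ n, M (n + 1) →ₗ[ℤ_[p]] M n) : Submodule ℤ_[p] (∀ n, M n) where
  carrier := {x | ∀ n, t n (x (n + 1)) = x n}
  add_mem' := by
    intro a b ha hb n
    simp only [Pi.add_apply, map_add, ha n, hb n]
  zero_mem' := by intro n; simp
  smul_mem' := by
    intro c a ha n
    simp only [Pi.smul_apply, map_smul, ha n]

/-- The map induced on inverse limits by a compatible family of linear maps. -/
noncomputable def InvLimMap {p : ℕ} [Fact p.Prime] {M N : ℕ → Type}
    [∀ n, AddCommGroup (M n)] [∀ n, Module ℤ_[p] (M n)]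
    [∀ n, AddCommGroup (N n)] [∀ n, Module ℤ_[p] (N n)]
    {tM : ∀ n, M (n + 1) →ₗ[ℤ_[p]] M n} {tN : ∀ n, N (n + 1) →ₗ[ℤ_[p]] N n}
    (f : ∀ n, M n →ₗ[ℤ_[p]] N n)
    (hcomp : ∀ n x, f n (tM n x) = tN n (f (n + 1) x)) :
    InvLim p M tM →ₗ[ℤ_[p]] InvLim p N tN where
  toFun x := ⟨fun n => f n (x.1 n), fun n => by
    rw [← hcomp n (x.1 (n + 1))]; exact congrArg (f n) (x.2 n)⟩
  map_add' x y := Subtype.ext (funext fun n => by simp)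
  map_smul' c x := Subtype.ext (funext fun n => by simp)

/-!
Inverse limits are exact along systems with finite kernels. Injectivity: a compatible sequence
in the kernel of `lim M_n → lim N_n` lifts uniquely through the injective `α_n` to an element of
`lim C_n = 0`. Surjectivity: the image of a compatible `y` in `lim D_n = 0` vanishes, so each
fibre `f_n⁻¹(y_n)` is nonempty; it is a torsor under the finite `C_n`, and König's lemma picks a
compatible sequence in the fibres. Both apply to the torsion parts because
`0 → C_n → M_n[p^∞] → N_n[p^∞] → D_n` stays exact: if `r • f m = 0`, then `r • m` comes from the
finite `C_n`, which is killed by `|C_n|`.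
-/

open CategoryTheory in
theorem exists_compatible_of_finite_inverse_sequence {S : ℕ → Type} [∀ n, Finite (S n)]
    [∀ n, Nonempty (S n)] (g : ∀ n, S (n + 1) → S n) :
    ∃ x : ∀ n, S n, ∀ n, g n (x (n + 1)) = x n := by
  let F := Functor.ofOpSequence (C := Type) (fun n => TypeCat.ofHom (g n))
  have : ∀ j : ℕᵒᵖ, Finite (F.obj j) := fun j => inferInstanceAs (Finite (S j.unop))
  have : ∀ j : ℕᵒᵖ, Nonempty (F.obj j) := fun j => inferInstanceAs (Nonempty (S j.unop))
  obtain ⟨u, hu⟩ := nonempty_sections_of_finite_inverse_system F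
  refine ⟨fun n => u ⟨n⟩, fun n => ?_⟩
  have := hu (homOfLE (Nat.le_add_right n 1)).op
  rwa [Functor.ofOpSequence_map_homOfLE_succ] at this

theorem LinearMap.finite_preimage_singleton_of_range_eq_ker {R C M N : Type*} [Ring R]
    [AddCommGroup C] [AddCommGroup M] [AddCommGroup N] [Module R C] [Module R M] [Module R N]
    [Finite C] {α : C →ₗ[R] M} {f : M →ₗ[R] N} (hαf : range α = ker f) (y : N) :
    (f ⁻¹' {y}).Finite := by
  rcases (f ⁻¹' {y}).eq_empty_or_nonempty with h | ⟨m₀, hm₀⟩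
  · simp [h]
  refine ((Set.finite_range α).image (m₀ + ·)).subset fun m hm => ?_
  have : m - m₀ ∈ range α := by
    rw [hαf, mem_ker, map_sub, hm, hm₀, sub_self]
  exact ⟨m - m₀, this, add_sub_cancel m₀ m⟩

section Torsion

variable {R C M N : Type*} [CommRing R] [IsDomain R] [CharZero R]
  [AddCommGroup C] [AddCommGroup M] [AddCommGroup N] [Module R C] [Module R M] [Module R N]
  [Finite C]

theorem LinearMap.mem_torsion_of_finite (α : C →ₗ[R] M) (c : C) :
    α c ∈ Submodule.torsion R M := by
  refine (Submodule.mem_torsion_iff _).mpr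
    ⟨⟨Nat.card C, mem_nonZeroDivisors_of_ne_zero (Nat.cast_ne_zero.mpr Nat.card_pos.ne')⟩, ?_⟩
  rw [Submonoid.mk_smul, Nat.cast_smul_eq_nsmul, ← map_nsmul, card_nsmul_eq_zero', map_zero]

theorem LinearMap.mem_torsion_of_map_mem_torsion {α : C →ₗ[R] M} {f : M →ₗ[R] N}
    (hαf : range α = ker f) {m : M} (hm : f m ∈ Submodule.torsion R N) :
    m ∈ Submodule.torsion R M := by
  obtain ⟨r, hr⟩ := (Submodule.mem_torsion_iff _).mp hm
  obtain ⟨c, hc⟩ : r • m ∈ range α := by rw [hαf, mem_ker, map_smul_of_tower, hr]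
  obtain ⟨s, hs⟩ := (Submodule.mem_torsion_iff _).mp (α.mem_torsion_of_finite c)
  exact (Submodule.mem_torsion_iff _).mpr ⟨s * r, by rw [mul_smul, ← hc, hs]⟩

theorem LinearMap.range_codRestrict_torsion_eq_ker_restrict {α : C →ₗ[R] M} {f : M →ₗ[R] N}
    (hαf : range α = ker f)
    (hfT : ∀ m ∈ Submodule.torsion R M, f m ∈ Submodule.torsion R N) :
    range (α.codRestrict _ α.mem_torsion_of_finite) = ker (f.restrict hfT) := by
  ext m
  simp only [mem_range, mem_ker, Subtype.ext_iff, codRestrict_apply, restrict_apply,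
    ZeroMemClass.coe_zero]
  rw [← mem_ker, ← hαf, mem_range]

theorem LinearMap.range_restrict_torsion_eq_ker_comp_subtype {D : Type*} [AddCommGroup D]
    [Module R D] {α : C →ₗ[R] M} {f : M →ₗ[R] N} {β : N →ₗ[R] D}
    (hαf : range α = ker f) (hfβ : range f = ker β)
    (hfT : ∀ m ∈ Submodule.torsion R M, f m ∈ Submodule.torsion R N) :
    range (f.restrict hfT) = ker (β ∘ₗ (Submodule.torsion R N).subtype) := by
  ext y
  constructor
  · rintro ⟨m, rfl⟩
    exact (hfβ ▸ mem_range_self f m : f m ∈ ker β)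
  · intro hy
    obtain ⟨m, hm⟩ : y.1 ∈ range f := hfβ ▸ hy
    exact ⟨⟨m, mem_torsion_of_map_mem_torsion hαf (hm ▸ y.2)⟩, Subtype.ext hm⟩

end Torsion

section InverseLimit

variable {p : ℕ} [Fact p.Prime] {C M N D : ℕ → Type}
  [∀ n, AddCommGroup (C n)] [∀ n, Module ℤ_[p] (C n)]
  [∀ n, AddCommGroup (M n)] [∀ n, Module ℤ_[p] (M n)]
  [∀ n, AddCommGroup (N n)] [∀ n, Module ℤ_[p] (N n)]
  [∀ n, AddCommGroup (D n)] [∀ n, Module ℤ_[p] (D n)]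
  {tC : ∀ n, C (n + 1) →ₗ[ℤ_[p]] C n} {tM : ∀ n, M (n + 1) →ₗ[ℤ_[p]] M n}
  {tN : ∀ n, N (n + 1) →ₗ[ℤ_[p]] N n} {tD : ∀ n, D (n + 1) →ₗ[ℤ_[p]] D n}
  {α : ∀ n, C n →ₗ[ℤ_[p]] M n} {f : ∀ n, M n →ₗ[ℤ_[p]] N n} {β : ∀ n, N n →ₗ[ℤ_[p]] D n}

theorem InvLim.apply_eq_zero (hlim : ∀ x : InvLim p M tM, x = 0) {x : ∀ n, M n}
    (hx : ∀ n, tM n (x (n + 1)) = x n) (n : ℕ) : x n = 0 :=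
  congrFun (congrArg Subtype.val (hlim ⟨x, hx⟩)) n

theorem invLimMap_injective (hcα : ∀ n x, α n (tC n x) = tM n (α (n + 1) x))
    (hcf : ∀ n x, f n (tM n x) = tN n (f (n + 1) x))
    (hαinj : ∀ n, Function.Injective (α n))
    (hαf : ∀ n, LinearMap.range (α n) = LinearMap.ker (f n))
    (hlimC : ∀ x : InvLim p C tC, x = 0) :
    Function.Injective (InvLimMap f hcf) := by
  refine (injective_iff_map_eq_zero _).mpr fun x hx => ?_
  have hker (n : ℕ) : x.1 n ∈ LinearMap.range (α n) := by
    rw [hαf n, LinearMap.mem_ker]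
    exact congrFun (congrArg Subtype.val hx) n
  choose c hc using hker
  have hcomp (n : ℕ) : tC n (c (n + 1)) = c n :=
    hαinj n (by rw [hcα, hc, hc]; exact x.2 n)
  ext n
  rw [← hc n, InvLim.apply_eq_zero hlimC hcomp n, map_zero]
  rfl

theorem invLimMap_surjective [∀ n, Finite (C n)]
    (hcf : ∀ n x, f n (tM n x) = tN n (f (n + 1) x))
    (hcβ : ∀ n x, β n (tN n x) = tD n (β (n + 1) x))
    (hαf : ∀ n, LinearMap.range (α n) = LinearMap.ker (f n))
    (hfβ : ∀ n, LinearMap.range (f n) = LinearMap.ker (β n))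
    (hlimD : ∀ x : InvLim p D tD, x = 0) :
    Function.Surjective (InvLimMap f hcf) := by
  intro y
  have hy (n : ℕ) : y.1 n ∈ LinearMap.range (f n) := by
    rw [hfβ n, LinearMap.mem_ker]
    exact InvLim.apply_eq_zero hlimD (x := fun n => β n (y.1 n))
      (fun n => by rw [← hcβ]; exact congrArg (β n) (y.2 n)) n
  let S (n : ℕ) := f n ⁻¹' {y.1 n}
  have (n : ℕ) : Nonempty (S n) := let ⟨m, hm⟩ := hy n; ⟨⟨m, hm⟩⟩
  have (n : ℕ) : Finite (S n) :=
    (LinearMap.finite_preimage_singleton_of_range_eq_ker (hαf n) _).to_subtype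
  obtain ⟨x, hx⟩ := exists_compatible_of_finite_inverse_sequence fun n (m : S (n + 1)) =>
    (⟨tM n m, show f n (tM n m) = y.1 n by
      rw [hcf, show f (n + 1) m = y.1 (n + 1) from m.2]; exact y.2 n⟩ : S n)
  exact ⟨⟨fun n => x n, fun n => congrArg Subtype.val (hx n)⟩,
    Subtype.ext (funext fun n => (x n).2)⟩

end InverseLimit

theorem stmt12_general (p : ℕ) [Fact p.Prime] (C M N D : ℕ → Type)
    [∀ n, AddCommGroup (C n)] [∀ n, Module ℤ_[p] (C n)]
    [∀ n, AddCommGroup (M n)] [∀ n, Module ℤ_[p] (M n)]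
    [∀ n, AddCommGroup (N n)] [∀ n, Module ℤ_[p] (N n)]
    [∀ n, AddCommGroup (D n)] [∀ n, Module ℤ_[p] (D n)]
    [∀ n, Finite (C n)]
    (tC : ∀ n, C (n + 1) →ₗ[ℤ_[p]] C n) (tM : ∀ n, M (n + 1) →ₗ[ℤ_[p]] M n)
    (tN : ∀ n, N (n + 1) →ₗ[ℤ_[p]] N n) (tD : ∀ n, D (n + 1) →ₗ[ℤ_[p]] D n)
    (α : ∀ n, C n →ₗ[ℤ_[p]] M n) (f : ∀ n, M n →ₗ[ℤ_[p]] N n) (β : ∀ n, N n →ₗ[ℤ_[p]] D n)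
    (hcα : ∀ n x, α n (tC n x) = tM n (α (n + 1) x))
    (hcf : ∀ n x, f n (tM n x) = tN n (f (n + 1) x))
    (hcβ : ∀ n x, β n (tN n x) = tD n (β (n + 1) x))
    (hαinj : ∀ n, Function.Injective (α n))
    (hαf : ∀ n, LinearMap.range (α n) = LinearMap.ker (f n))
    (hfβ : ∀ n, LinearMap.range (f n) = LinearMap.ker (β n))
    (hlimC : ∀ x : InvLim p C tC, x = 0)
    (hlimD : ∀ x : InvLim p D tD, x = 0)
    (hTM : ∀ n, ∀ x ∈ Submodule.torsion ℤ_[p] (M (n + 1)),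
      tM n x ∈ Submodule.torsion ℤ_[p] (M n))
    (hTN : ∀ n, ∀ x ∈ Submodule.torsion ℤ_[p] (N (n + 1)),
      tN n x ∈ Submodule.torsion ℤ_[p] (N n))
    (hfT : ∀ n, ∀ x ∈ Submodule.torsion ℤ_[p] (M n),
      f n x ∈ Submodule.torsion ℤ_[p] (N n)) :
    Function.Bijective
      (InvLimMap (p := p)
        (M := fun n => ↥(Submodule.torsion ℤ_[p] (M n)))
        (N := fun n => ↥(Submodule.torsion ℤ_[p] (N n)))
        (tM := fun n => (tM n).restrict (hTM n))
        (tN := fun n => (tN n).restrict (hTN n))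
        (fun n => (f n).restrict (hfT n))
        (fun n x => Subtype.ext (hcf n x.1))) := by
  let αT (n : ℕ) := (α n).codRestrict _ (α n).mem_torsion_of_finite
  have hM_exact (n : ℕ) : LinearMap.range (αT n) = LinearMap.ker ((f n).restrict (hfT n)) :=
    LinearMap.range_codRestrict_torsion_eq_ker_restrict (hαf n) (hfT n)
  have hN_exact (n : ℕ) : LinearMap.range ((f n).restrict (hfT n)) =
      LinearMap.ker (β n ∘ₗ (Submodule.torsion ℤ_[p] (N n)).subtype) :=
    LinearMap.range_restrict_torsion_eq_ker_comp_subtype (hαf n) (hfβ n) (hfT n)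
  exact ⟨invLimMap_injective (tC := tC) (tM := fun n => (tM n).restrict (hTM n))
      (fun n x => Subtype.ext (hcα n x)) _ (fun n _ _ h => hαinj n (congrArg Subtype.val h))
      hM_exact hlimC,
    invLimMap_surjective (tD := tD) _ (fun n x => hcβ n x.1) hM_exact hN_exact hlimD⟩

/-- Given inverse systems of finitely generated `ℤ_[p]`-modules with
compatible exact sequences `0 → C_n → M_n → N_n → D_n → 0` where each `C_n` and `D_n`
is finite, and `lim C_n = 0`, `lim D_n = 0`, the induced map
`lim (M_n[p^∞]) → lim (N_n[p^∞])` is an isomorphism. -/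
theorem stmt12 (p : ℕ) [Fact p.Prime] (C M N D : ℕ → Type)
    [∀ n, AddCommGroup (C n)] [∀ n, Module ℤ_[p] (C n)] [∀ n, Module.Finite ℤ_[p] (C n)]
    [∀ n, AddCommGroup (M n)] [∀ n, Module ℤ_[p] (M n)] [∀ n, Module.Finite ℤ_[p] (M n)]
    [∀ n, AddCommGroup (N n)] [∀ n, Module ℤ_[p] (N n)] [∀ n, Module.Finite ℤ_[p] (N n)]
    [∀ n, AddCommGroup (D n)] [∀ n, Module ℤ_[p] (D n)] [∀ n, Module.Finite ℤ_[p] (D n)]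
    [∀ n, Finite (C n)] [∀ n, Finite (D n)]
    (tC : ∀ n, C (n + 1) →ₗ[ℤ_[p]] C n) (tM : ∀ n, M (n + 1) →ₗ[ℤ_[p]] M n)
    (tN : ∀ n, N (n + 1) →ₗ[ℤ_[p]] N n) (tD : ∀ n, D (n + 1) →ₗ[ℤ_[p]] D n)
    (α : ∀ n, C n →ₗ[ℤ_[p]] M n) (f : ∀ n, M n →ₗ[ℤ_[p]] N n) (β : ∀ n, N n →ₗ[ℤ_[p]] D n)
    (hcα : ∀ n x, α n (tC n x) = tM n (α (n + 1) x))
    (hcf : ∀ n x, f n (tM n x) = tN n (f (n + 1) x))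
    (hcβ : ∀ n x, β n (tN n x) = tD n (β (n + 1) x))
    (hαinj : ∀ n, Function.Injective (α n))
    (hβsurj : ∀ n, Function.Surjective (β n))
    (hαf : ∀ n, LinearMap.range (α n) = LinearMap.ker (f n))
    (hfβ : ∀ n, LinearMap.range (f n) = LinearMap.ker (β n))
    (hlimC : ∀ x : InvLim p C tC, x = 0)
    (hlimD : ∀ x : InvLim p D tD, x = 0)
    (hTM : ∀ n, ∀ x ∈ Submodule.torsion ℤ_[p] (M (n + 1)),
      tM n x ∈ Submodule.torsion ℤ_[p] (M n))
    (hTN : ∀ n, ∀ x ∈ Submodule.torsion ℤ_[p] (N (n + 1)),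
      tN n x ∈ Submodule.torsion ℤ_[p] (N n))
    (hfT : ∀ n, ∀ x ∈ Submodule.torsion ℤ_[p] (M n),
      f n x ∈ Submodule.torsion ℤ_[p] (N n)) :
    Function.Bijective
      (InvLimMap (p := p)
        (M := fun n => ↥(Submodule.torsion ℤ_[p] (M n)))
        (N := fun n => ↥(Submodule.torsion ℤ_[p] (N n)))
        (tM := fun n => (tM n).restrict (hTM n))
        (tN := fun n => (tN n).restrict (hTN n))
        (fun n => (f n).restrict (hfT n))
        (fun n x => Subtype.ext (hcf n x.1))) :=
  stmt12_general p C M N D tC tM tN tD α f β hcα hcf hcβ hαinj hαf hfβ hlimC hlimD hTM hTN hfT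
end
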